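/- arXiv:1506.03174 — 4 statements merged into one kernel-verified Lean document; each statement's English description precedes it below -/
import Mathlib

section
/- Let Ξ = x_1 * x_2 * ··· * x_n be the Baker–Campbell–Hausdorff product in T_{\ge 1}, so that e^Ξ = e^{x_1}···e^{x_n}. Let Y^{-1} denote the ⋄-inverse of Y := -Ξ^{-1} + x_0 s(Ξ) x_0 (inverses with respect to ⋄, unit x_0). Then Y^{-1} = -1 + e^{-Ξ} = -1 + e^{-x_n}···e^{-x_1}; equivalently (−1 + e^{−Ξ}) ⋄ Y = x_0. -/
/-- Words in the generators `x_1, …, x_n` (indexed by `Fin n`). -/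
abbrev Word (n : ℕ) := List (Fin n)

/-- The completed tensor algebra `T = ∏ₘ H^{⊗m}` on the basis `x_1, …, x_n` of `H`,
modeled as the space of ℚ-valued coefficient functions on words in the generators. -/
abbrev T (n : ℕ) : Type := Word n → ℚ

/-- The generator `x_k` as an element of `T n`. -/
def xgen {n : ℕ} (k : Fin n) : T n := fun w => if w = [k] then 1 else 0

/-- `x₀ = -∑ₖ xₖ`. -/
def x0 (n : ℕ) : T n := -∑ k : Fin n, xgen k

/-- The operation `⋄` on `T_{≥1}`, determined on monomials by
`(x_{i_1}⋯x_{i_{l-1}}x_{i_l}) ⋄ (x_{j_1}x_{j_2}⋯x_{j_m})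
  = -δ_{i_l j_1} x_{i_1}⋯x_{i_{l-1}} x_{j_1}x_{j_2}⋯x_{j_m}`,
extended bilinearly and continuously. -/
def dia {n : ℕ} (f g : T n) : T n :=
  fun w => -∑ i ∈ Finset.range w.length, f (w.take (i + 1)) * g (w.drop i)

/-- `f ∈ T_{≥p}`: all components of degree `< p` vanish. -/
def degGE {n : ℕ} (p : ℕ) (f : T n) : Prop := ∀ w : Word n, w.length < p → f w = 0

/-- The unit `1 ∈ T n` for the tensor product. -/
def oneT {n : ℕ} : T n := fun w => if w = [] then 1 else 0

/-- The (completed) tensor product on `T n`: concatenation product. -/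
def mulT {n : ℕ} (f g : T n) : T n :=
  fun w => ∑ i ∈ Finset.range (w.length + 1), f (w.take i) * g (w.drop i)

/-- Powers with respect to the tensor product. -/
def powT {n : ℕ} (f : T n) : ℕ → T n
  | 0 => oneT
  | m + 1 => mulT f (powT f m)

/-- Ordered product of a list of elements of `T n`. -/
def prodT {n : ℕ} : List (T n) → T n
  | [] => oneT
  | a :: l => mulT a (prodT l)

/-- Substitution of an element `a ∈ T_{≥1}` into a formal power series `F ∈ ℚ[[z]]`:
`F(a) = ∑ₘ (coeff m F) aᵐ`, a finite sum in each degree. -/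
noncomputable def substT {n : ℕ} (F : PowerSeries ℚ) (a : T n) : T n :=
  fun w => ∑ m ∈ Finset.range (w.length + 1), PowerSeries.coeff m F * powT a m w

/-- The exponential `e^a` for `a ∈ T_{≥1}`. -/
noncomputable def expT {n : ℕ} (a : T n) : T n := substT (PowerSeries.exp ℚ) a

/-- The power series `log(1+z) = ∑_{m≥1} (-1)^{m+1} zᵐ/m`. -/
def logSeries : PowerSeries ℚ :=
  PowerSeries.mk fun m => if m = 0 then 0 else (-1 : ℚ) ^ (m + 1) / (m : ℚ)

/-- The logarithm `log a` for `a ∈ 1 + T_{≥1}`. -/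
noncomputable def logT {n : ℕ} (a : T n) : T n := substT logSeries (a - oneT)

/-- The Baker–Campbell–Hausdorff product `Ξ = x₁ * x₂ * ⋯ * xₙ = log(e^{x₁}e^{x₂}⋯e^{xₙ})`. -/
noncomputable def Xi (n : ℕ) : T n := logT (prodT ((List.finRange n).map fun k => expT (xgen k)))

/-- The continuous algebra automorphism `Q` of `T n` with `Q(x_k) = -x_{n-k+1}`
(reversing and negating the basis). -/
def Qauto {n : ℕ} (f : T n) : T n := fun w => (-1 : ℚ) ^ w.length * f (w.map Fin.rev)

/-- `s(z) = 1/(e^{-z}-1) + 1/z` is characterized in `ℚ[[z]]` by the equation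
`s(z) · (z·(e^{-z}-1)) = z + (e^{-z}-1)`. -/
def sSpec (s : PowerSeries ℚ) : Prop :=
  s * (PowerSeries.X * (PowerSeries.rescale (-1) (PowerSeries.exp ℚ) - 1)) =
    PowerSeries.X + (PowerSeries.rescale (-1) (PowerSeries.exp ℚ) - 1)

/-- `g(z) = z/(e^{-z}-1)` is characterized in `ℚ[[z]]` by `g(z)·(e^{-z}-1) = z`. -/
def gSpec (g : PowerSeries ℚ) : Prop :=
  g * (PowerSeries.rescale (-1) (PowerSeries.exp ℚ) - 1) = PowerSeries.X

/-!
Write `E = e^{-Ξ} - 1` and `S = s(Ξ)`. The defining equation of `s` says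
`E S Ξ = Ξ + E = Ξ S E` in the concatenation algebra. Since `(f x₀) ⋄ g = f g` and
`f ⋄ (x₀ g) = f g` when `g`, resp. `f`, has no constant term, `Z = x₀ - E S x₀` satisfies
`Z ⋄ (-Ξ) = E`, so `E ⋄ V = Z ⋄ ((-Ξ) ⋄ V) = Z` and `E ⋄ (V + x₀ S x₀) = Z + E S x₀ = x₀`;
the other side is symmetric. The product formula for `e^{-Ξ}` follows from
`exp(log(1 + X)) = 1 + X` in `ℚ⟦X⟧`, whose left side solves `(1 + X) φ' = φ`, `φ(0) = 1`.
-/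

open Finset
open scoped PowerSeries

theorem Finset.sum_range_triangle {M : Type*} [AddCommMonoid M] (N : ℕ) (F : ℕ → ℕ → M) :
    ∑ j ∈ range N, ∑ i ∈ range (j + 1), F i j
      = ∑ i ∈ range N, ∑ k ∈ range (N - i), F i (i + k) := by
  rw [← sum_range_diag_flip N fun i k => F i (i + k)]
  refine sum_congr rfl fun j _ => sum_congr rfl fun i hi => ?_
  rw [Nat.add_sub_cancel' (Nat.lt_succ_iff.1 (mem_range.1 hi))]

theorem Finset.sum_range_square_eq_sum_antidiagonal {M : Type*} [AddCommMonoid M] (N : ℕ)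
    (H : ℕ → ℕ → M) (hH : ∀ p q, N < p + q → H p q = 0) :
    ∑ p ∈ range (N + 1), ∑ q ∈ range (N + 1), H p q
      = ∑ m ∈ range (N + 1), ∑ ij ∈ antidiagonal m, H ij.1 ij.2 := by
  simp_rw [Nat.sum_antidiagonal_eq_sum_range_succ_mk, sum_range_diag_flip (N + 1) H]
  refine sum_congr rfl fun p hp => (sum_subset (range_subset_range.2 (by omega)) ?_).symm
  intro q _ hq
  simp only [mem_range] at hp hq
  exact hH p q (by omega)

section ConcatenationProduct

variable {n : ℕ}

theorem mulT_apply_nil (f g : T n) : mulT f g [] = f [] * g [] := by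
  simp [mulT]

theorem mulT_one (f : T n) : mulT f oneT = f := by
  funext w
  rw [mulT, sum_eq_single_of_mem w.length (self_mem_range_succ _)]
  · simp [oneT]
  · intro i hi hne
    rw [mem_range] at hi
    have : w.drop i ≠ [] := by rw [Ne, List.drop_eq_nil_iff]; omega
    simp [oneT, this]

theorem one_mulT (f : T n) : mulT oneT f = f := by
  funext w
  rw [mulT, sum_eq_single_of_mem 0 (by simp)]
  · simp [oneT]
  · intro i hi hne
    rw [mem_range] at hi
    have : w.take i ≠ [] := by
      rw [Ne, List.take_eq_nil_iff]
      exact not_or.2 ⟨hne, List.ne_nil_of_length_pos (by omega)⟩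
    simp [oneT, this]

theorem mulT_assoc (f g h : T n) : mulT (mulT f g) h = mulT f (mulT g h) := by
  funext w
  set F : ℕ → ℕ → ℚ :=
    fun i j => f (w.take i) * (g ((w.drop i).take (j - i)) * h (w.drop j))
  have hL : mulT (mulT f g) h w
      = ∑ j ∈ range (w.length + 1), ∑ i ∈ range (j + 1), F i j := by
    refine sum_congr rfl fun j hj => ?_
    rw [mem_range] at hj
    rw [mulT, sum_mul, List.length_take, min_eq_left (by omega)]
    refine sum_congr rfl fun i hi => ?_
    rw [mem_range] at hi
    rw [List.take_take, min_eq_left (by omega), List.drop_take, mul_assoc]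
  have hR : mulT f (mulT g h) w
      = ∑ i ∈ range (w.length + 1), ∑ k ∈ range (w.length + 1 - i), F i (i + k) := by
    refine sum_congr rfl fun i hi => ?_
    rw [mem_range] at hi
    rw [mulT, mul_sum, List.length_drop, Nat.sub_add_comm (by omega)]
    refine sum_congr rfl fun k _ => ?_
    simp only [F, List.drop_drop, Nat.add_sub_cancel_left]
  rw [hL, hR, sum_range_triangle]

theorem mulT_smul_left (c : ℚ) (f g : T n) : mulT (c • f) g = c • mulT f g := by
  funext w
  simp only [mulT, Pi.smul_apply, smul_eq_mul, mul_sum, mul_assoc]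

theorem mulT_smul_right (c : ℚ) (f g : T n) : mulT f (c • g) = c • mulT f g := by
  funext w
  simp only [mulT, Pi.smul_apply, smul_eq_mul, mul_sum, mul_left_comm]

theorem mulT_neg_left (f g : T n) : mulT (-f) g = -mulT f g := by
  funext w
  simp only [mulT, Pi.neg_apply, neg_mul, sum_neg_distrib]

theorem mulT_neg_right (f g : T n) : mulT f (-g) = -mulT f g := by
  funext w
  simp only [mulT, Pi.neg_apply, mul_neg, sum_neg_distrib]

theorem powT_add (a : T n) (p q : ℕ) : powT a (p + q) = mulT (powT a p) (powT a q) := by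
  induction p with
  | zero => rw [Nat.zero_add, powT, one_mulT]
  | succ p ih => rw [Nat.add_right_comm, powT, powT, ih, mulT_assoc]

theorem powT_smul (c : ℚ) (a : T n) (m : ℕ) : powT (c • a) m = c ^ m • powT a m := by
  induction m with
  | zero => rw [powT, powT, pow_zero, one_smul]
  | succ m ih => rw [powT, powT, ih, mulT_smul_left, mulT_smul_right, smul_smul, pow_succ']

theorem powT_apply_eq_zero_of_length_lt {a : T n} (ha : a [] = 0) {m : ℕ} {w : Word n}
    (hw : w.length < m) : powT a m w = 0 := by
  induction m generalizing w with
  | zero => omega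
  | succ m ih =>
    rw [powT, mulT]
    refine sum_eq_zero fun i hi => ?_
    rcases i with _ | i
    · rw [List.take_zero, ha, zero_mul]
    · rw [mem_range] at hi
      rw [ih (by rw [List.length_drop]; omega), mul_zero]

theorem prodT_append (u v : List (T n)) : prodT (u ++ v) = mulT (prodT u) (prodT v) := by
  induction u with
  | nil => rw [List.nil_append, prodT, one_mulT]
  | cons a u ih => rw [List.cons_append, prodT, prodT, ih, mulT_assoc]

end ConcatenationProduct

namespace PowerSeries

theorem coeff_subst_eq_sum_range {R : Type*} [CommRing R] {G : R⟦X⟧} (hG : constantCoeff G = 0)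
    (F : R⟦X⟧) {j K : ℕ} (hK : j < K) :
    coeff j (F.subst G) = ∑ m ∈ range K, coeff m F * coeff j (G ^ m) := by
  rw [coeff_subst' (HasSubst.of_constantCoeff_zero' hG)]
  refine finsum_eq_sum_of_support_subset _ fun m hm => ?_
  by_contra hmK
  simp only [coe_range, Set.mem_Iio, not_lt] at hmK
  have hjm : (j : ℕ∞) < (G ^ m).order :=
    (Nat.cast_lt.2 (by omega)).trans_le (le_order_pow_of_constantCoeff_eq_zero m hG)
  exact hm (by simp only [coeff_of_lt_order j hjm, smul_zero])

theorem coeff_one_add_X_mul_derivative {R : Type*} [CommRing R] (φ : R⟦X⟧) (j : ℕ) :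
    coeff j ((1 + X) * d⁄dX R φ) = coeff (j + 1) φ * (j + 1) + coeff j φ * j := by
  rw [add_mul, one_mul, map_add]
  rcases j with _ | k
  · simp [coeff_derivative]
  · rw [coeff_succ_X_mul, coeff_derivative, coeff_derivative]
    push_cast
    ring

theorem one_add_X_mul_derivative_log : (1 + X) * d⁄dX ℚ (log ℚ) = 1 := by
  ext j
  rw [coeff_one_add_X_mul_derivative]
  rcases j with _ | k
  · simp
  · simp only [coeff_log, coeff_one, Nat.add_one_ne_zero, if_false, Algebra.algebraMap_self,
      RingHom.id_apply]
    push_cast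
    field_simp
    ring

theorem eq_one_add_X_of_one_add_X_mul_derivative {φ : ℚ⟦X⟧}
    (h : (1 + X) * d⁄dX ℚ φ = φ) (h0 : constantCoeff φ = 1) : φ = 1 + X := by
  set ψ := φ - (1 + X) with hψ
  have hψ' : (1 + X) * d⁄dX ℚ ψ = ψ := by
    rw [hψ, map_sub, mul_sub, h, map_add, Derivation.map_one_eq_zero, derivative_X, zero_add,
      mul_one]
  have hrec (j : ℕ) : coeff (j + 1) ψ * (j + 1) = coeff j ψ * (1 - j) := by
    have := congrArg (coeff j) hψ'
    rw [coeff_one_add_X_mul_derivative] at this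
    linear_combination this
  have hψ0 (j : ℕ) : coeff j ψ = 0 := by
    induction j with
    | zero => simp [hψ, h0]
    | succ j ih =>
      have := hrec j
      rw [ih, zero_mul] at this
      exact (mul_eq_zero.1 this).resolve_right (by positivity)
  exact sub_eq_zero.1 (ext fun j => by rw [hψ0 j, map_zero])

theorem exp_subst_log : (exp ℚ).subst (log ℚ) = 1 + X := by
  apply eq_one_add_X_of_one_add_X_mul_derivative
  · rw [derivative_subst HasSubst.log, derivative_exp, mul_left_comm,
      one_add_X_mul_derivative_log, mul_one]
  · rw [← coeff_zero_eq_constantCoeff_apply,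
      coeff_subst_eq_sum_range constantCoeff_log _ zero_lt_one]
    simp

end PowerSeries

theorem logSeries_eq_log : logSeries = PowerSeries.log ℚ := rfl

section Substitution

variable {n : ℕ}

open PowerSeries

theorem substT_apply_nil (F : ℚ⟦X⟧) (a : T n) : substT F a [] = coeff 0 F := by
  simp [substT, powT, oneT]

theorem substT_apply_eq_sum_range {a : T n} (ha : a [] = 0) (F : ℚ⟦X⟧) {w : Word n} {K : ℕ}
    (hK : w.length < K) : substT F a w = ∑ m ∈ range K, coeff m F * powT a m w := by
  refine sum_subset (range_subset_range.2 hK) fun m _ hm => ?_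
  rw [mem_range, not_lt] at hm
  rw [powT_apply_eq_zero_of_length_lt ha (by omega), mul_zero]

theorem substT_add (F G : ℚ⟦X⟧) (a : T n) : substT (F + G) a = substT F a + substT G a := by
  funext w
  simp only [substT, Pi.add_apply, map_add, add_mul, sum_add_distrib]

theorem substT_sub (F G : ℚ⟦X⟧) (a : T n) : substT (F - G) a = substT F a - substT G a := by
  funext w
  simp only [substT, Pi.sub_apply, map_sub, sub_mul, sum_sub_distrib]

theorem substT_one (a : T n) : substT 1 a = oneT := by
  funext w
  rw [substT, sum_eq_single_of_mem 0 (by simp)]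
  · rw [coeff_one, if_pos rfl, one_mul, powT]
  · intro m _ hm
    rw [coeff_one, if_neg hm, zero_mul]

theorem substT_X {a : T n} (ha : a [] = 0) : substT X a = a := by
  funext w
  rw [substT_apply_eq_sum_range ha X (K := w.length + 2) (by omega),
    sum_eq_single_of_mem 1 (by simp)]
  · rw [coeff_one_X, one_mul, powT, powT, mulT_one]
  · intro m _ hm
    rw [coeff_X, if_neg hm, zero_mul]

theorem substT_mul {a : T n} (ha : a [] = 0) (F G : ℚ⟦X⟧) :
    substT (F * G) a = mulT (substT F a) (substT G a) := by
  funext w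
  set N := w.length
  have hL : substT (F * G) a w = ∑ m ∈ range (N + 1), ∑ pq ∈ antidiagonal m,
      coeff pq.1 F * coeff pq.2 G * powT a (pq.1 + pq.2) w := by
    refine sum_congr rfl fun m _ => ?_
    rw [coeff_mul, sum_mul]
    refine sum_congr rfl fun pq hpq => ?_
    rw [mem_antidiagonal.1 hpq]
  have hR : mulT (substT F a) (substT G a) w = ∑ p ∈ range (N + 1),
      ∑ q ∈ range (N + 1), coeff p F * coeff q G * powT a (p + q) w := by
    have hsplit (i : ℕ) (hi : i ∈ range (N + 1)) :
        substT F a (w.take i) * substT G a (w.drop i) = ∑ p ∈ range (N + 1),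
          ∑ q ∈ range (N + 1),
            coeff p F * coeff q G * (powT a p (w.take i) * powT a q (w.drop i)) := by
      rw [mem_range] at hi
      rw [substT_apply_eq_sum_range ha F (K := N + 1) (by rw [List.length_take]; omega),
        substT_apply_eq_sum_range ha G (K := N + 1) (by simp [N]), sum_mul_sum]
      exact sum_congr rfl fun p _ => sum_congr rfl fun q _ => by ring
    rw [mulT, sum_congr rfl hsplit, sum_comm]
    refine sum_congr rfl fun p _ => ?_
    rw [sum_comm]
    refine sum_congr rfl fun q _ => ?_
    rw [← mul_sum, powT_add, mulT]
  rw [hL, hR, sum_range_square_eq_sum_antidiagonal N _ fun p q hpq => by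
    rw [powT_apply_eq_zero_of_length_lt ha hpq, mul_zero]]

theorem substT_rescale (c : ℚ) (F : ℚ⟦X⟧) (a : T n) :
    substT (rescale c F) a = substT F (c • a) := by
  funext w
  refine sum_congr rfl fun m _ => ?_
  rw [coeff_rescale, powT_smul, Pi.smul_apply, smul_eq_mul, mul_assoc, mul_left_comm]

theorem powT_substT {a : T n} (ha : a [] = 0) (G : ℚ⟦X⟧) (m : ℕ) :
    powT (substT G a) m = substT (G ^ m) a := by
  induction m with
  | zero => rw [powT, pow_zero, substT_one]
  | succ m ih => rw [powT, ih, ← substT_mul ha, pow_succ']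

theorem substT_substT {a : T n} (ha : a [] = 0) {G : ℚ⟦X⟧} (hG : constantCoeff G = 0)
    (F : ℚ⟦X⟧) : substT F (substT G a) = substT (F.subst G) a := by
  funext w
  set N := w.length
  calc substT F (substT G a) w
      = ∑ m ∈ range (N + 1), ∑ j ∈ range (N + 1),
          coeff m F * (coeff j (G ^ m) * powT a j w) := by
        refine sum_congr rfl fun m _ => ?_
        rw [powT_substT ha, substT, mul_sum]
    _ = ∑ j ∈ range (N + 1), coeff j (F.subst G) * powT a j w := by
        rw [sum_comm]
        refine sum_congr rfl fun j hj => ?_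
        rw [coeff_subst_eq_sum_range hG F (mem_range.1 hj), sum_mul]
        exact sum_congr rfl fun m _ => by ring

end Substitution

section Diamond

variable {n : ℕ}

theorem x0_apply (w : Word n) : x0 n w = if w.length = 1 then -1 else 0 := by
  rcases w with _ | ⟨a, _ | ⟨b, w⟩⟩ <;>
    simp [x0, xgen, Finset.sum_apply, List.cons.injEq]

theorem x0_apply_nil : x0 n [] = 0 := by
  simp [x0_apply]

theorem dia_add_left (f g h : T n) : dia (f + g) h = dia f h + dia g h := by
  funext w
  simp only [dia, Pi.add_apply, add_mul, sum_add_distrib, neg_add]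

theorem dia_add_right (f g h : T n) : dia f (g + h) = dia f g + dia f h := by
  funext w
  simp only [dia, Pi.add_apply, mul_add, sum_add_distrib, neg_add]

theorem dia_sub_left (f g h : T n) : dia (f - g) h = dia f h - dia g h := by
  funext w
  simp only [dia, Pi.sub_apply, sub_mul, sum_sub_distrib, neg_sub_neg, neg_sub']

theorem dia_sub_right (f g h : T n) : dia f (g - h) = dia f g - dia f h := by
  funext w
  simp only [dia, Pi.sub_apply, mul_sub, sum_sub_distrib, neg_sub_neg, neg_sub']

theorem dia_x0_left {g : T n} (hg : g [] = 0) : dia (x0 n) g = g := by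
  funext w
  rcases eq_or_ne w [] with rfl | hw
  · simp [dia, hg]
  have hpos : 0 < w.length := List.length_pos_iff.2 hw
  rw [dia, sum_eq_single_of_mem 0 (mem_range.2 hpos)]
  · simp [x0_apply, Nat.one_le_iff_ne_zero.2 hpos.ne']
  · intro i hi hi0
    rw [mem_range] at hi
    rw [x0_apply, List.length_take, if_neg (by omega), zero_mul]

theorem dia_x0_right {f : T n} (hf : f [] = 0) : dia f (x0 n) = f := by
  funext w
  rcases eq_or_ne w [] with rfl | hw
  · simp [dia, hf]
  have hpos : 0 < w.length := List.length_pos_iff.2 hw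
  rw [dia, sum_eq_single_of_mem (w.length - 1) (mem_range.2 (by omega))]
  · rw [x0_apply, List.length_drop, if_pos (by omega), Nat.sub_add_cancel hpos, List.take_length,
      mul_neg_one, neg_neg]
  · intro i hi hne
    rw [mem_range] at hi
    rw [x0_apply, List.length_drop, if_neg (by omega), mul_zero]

theorem dia_assoc (f g h : T n) : dia (dia f g) h = dia f (dia g h) := by
  funext w
  set F : ℕ → ℕ → ℚ :=
    fun i j => f (w.take (i + 1)) * (g ((w.drop i).take (j + 1 - i)) * h (w.drop j))
  have hL : dia (dia f g) h w = ∑ j ∈ range w.length, ∑ i ∈ range (j + 1), F i j := by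
    rw [dia, ← sum_neg_distrib]
    refine sum_congr rfl fun j hj => ?_
    rw [mem_range] at hj
    rw [dia, neg_mul, neg_neg, sum_mul, List.length_take, min_eq_left (by omega)]
    refine sum_congr rfl fun i hi => ?_
    rw [mem_range] at hi
    rw [List.take_take, min_eq_left (by omega), List.drop_take, mul_assoc]
  have hR : dia f (dia g h) w
      = ∑ i ∈ range w.length, ∑ k ∈ range (w.length - i), F i (i + k) := by
    rw [dia, ← sum_neg_distrib]
    refine sum_congr rfl fun i _ => ?_
    rw [dia, mul_neg, neg_neg, mul_sum, List.length_drop]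
    refine sum_congr rfl fun k _ => ?_
    simp only [F, List.drop_drop, Nat.add_assoc, Nat.add_sub_cancel_left]
  rw [hL, hR, sum_range_triangle]

theorem dia_mulT_x0_left (f g : T n) : dia (mulT f (x0 n)) g = mulT f g - g [] • f := by
  funext w
  have hfx0 (i : ℕ) (hi : i < w.length) : mulT f (x0 n) (w.take (i + 1)) = -f (w.take i) := by
    rw [mulT, List.length_take, min_eq_left (by omega),
      sum_eq_single_of_mem i (mem_range.2 (by omega))]
    · rw [x0_apply, List.length_drop, List.length_take, if_pos (by omega), List.take_take,
        min_eq_left (by omega), mul_neg_one]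
    · intro t ht hti
      rw [mem_range] at ht
      rw [x0_apply, List.length_drop, List.length_take, if_neg (by omega), mul_zero]
  rw [dia, sum_congr rfl fun i hi => by rw [hfx0 i (mem_range.1 hi)], Pi.sub_apply,
    Pi.smul_apply, smul_eq_mul, mulT, sum_range_succ, List.take_length, List.drop_length]
  simp only [neg_mul, sum_neg_distrib, neg_neg]
  ring

theorem dia_x0_mulT_right (f g : T n) : dia f (mulT (x0 n) g) = mulT f g - f [] • g := by
  funext w
  have hx0g (i : ℕ) (hi : i < w.length) : mulT (x0 n) g (w.drop i) = -g (w.drop (i + 1)) := by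
    rw [mulT, List.length_drop, sum_eq_single_of_mem 1 (mem_range.2 (by omega))]
    · rw [x0_apply, List.length_take, List.length_drop, if_pos (by omega), List.drop_drop,
        neg_one_mul]
    · intro t ht ht1
      rw [mem_range] at ht
      rw [x0_apply, List.length_take, List.length_drop, if_neg (by omega), zero_mul]
  rw [dia, sum_congr rfl fun i hi => by rw [hx0g i (mem_range.1 hi)], Pi.sub_apply,
    Pi.smul_apply, smul_eq_mul, mulT, sum_range_succ', List.take_zero, List.drop_zero]
  simp only [mul_neg, sum_neg_distrib, neg_neg]
  ring

end Diamond

section Exponential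

variable {n : ℕ}

open PowerSeries

theorem expT_apply_nil (a : T n) : expT a [] = 1 := by
  rw [expT, substT_apply_nil, coeff_exp]
  norm_num

theorem expT_neg (a : T n) : expT (-a) = substT (rescale (-1) (exp ℚ)) a := by
  rw [expT, substT_rescale, neg_one_smul]

theorem mulT_expT_expT_neg {a : T n} (ha : a [] = 0) : mulT (expT a) (expT (-a)) = oneT := by
  rw [expT_neg, expT, ← substT_mul ha, ← evalNegHom, exp_mul_exp_neg_eq_one, substT_one]

theorem mulT_expT_neg_expT {a : T n} (ha : a [] = 0) : mulT (expT (-a)) (expT a) = oneT := by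
  rw [expT_neg, expT, ← substT_mul ha, ← evalNegHom, mul_comm, exp_mul_exp_neg_eq_one,
    substT_one]

theorem logT_apply_nil (A : T n) : logT A [] = 0 := by
  rw [logT, substT_apply_nil, logSeries_eq_log, coeff_zero_eq_constantCoeff_apply,
    constantCoeff_log]

theorem expT_logT {A : T n} (hA : A [] = 1) : expT (logT A) = A := by
  have hA1 : (A - oneT : T n) [] = 0 := by simp [hA, oneT]
  rw [expT, logT, substT_substT hA1 (by rw [logSeries_eq_log, constantCoeff_log]),
    logSeries_eq_log, exp_subst_log, substT_add, substT_one, substT_X hA1, add_sub_cancel]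

theorem prodT_apply_nil (l : List (T n)) : prodT l [] = (l.map fun f => f []).prod := by
  induction l with
  | nil => simp [prodT, oneT]
  | cons f l ih => rw [prodT, mulT_apply_nil, ih, List.map_cons, List.prod_cons]

theorem mulT_prodT_expT_prodT_expT_neg {ι : Type*} (a : ι → T n) (ha : ∀ i, a i [] = 0)
    (l : List ι) :
    mulT (prodT (l.map fun i => expT (a i))) (prodT (l.reverse.map fun i => expT (-a i)))
      = oneT := by
  induction l with
  | nil => rw [List.map_nil, List.reverse_nil, List.map_nil, prodT, mulT_one]
  | cons i l ih =>
    rw [List.reverse_cons, List.map_append, prodT_append, List.map_cons, prodT, List.map_singleton,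
      prodT, prodT, mulT_one, mulT_assoc, ← mulT_assoc (prodT _), ih, one_mulT,
      mulT_expT_expT_neg (ha i)]

theorem left_inv_eq_right_inv_mulT {x y z : T n} (hxy : mulT x y = oneT) (hyz : mulT y z = oneT) :
    x = z := by
  rw [← mulT_one x, ← hyz, ← mulT_assoc, hxy, one_mulT]

theorem Xi_apply_nil : Xi n [] = 0 := logT_apply_nil _

theorem expT_Xi : expT (Xi n) = prodT ((List.finRange n).map fun k => expT (xgen k)) := by
  refine expT_logT ?_
  rw [prodT_apply_nil, List.map_map]
  exact List.prod_eq_one fun x hx => by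
    obtain ⟨k, -, rfl⟩ := List.mem_map.1 hx
    exact expT_apply_nil _

theorem expT_neg_Xi :
    expT (-(Xi n)) = prodT ((List.finRange n).reverse.map fun k => expT (-(xgen k))) := by
  refine left_inv_eq_right_inv_mulT (mulT_expT_neg_expT Xi_apply_nil) ?_
  rw [expT_Xi]
  exact mulT_prodT_expT_prodT_expT_neg xgen (fun k => by simp [xgen]) _

end Exponential

section DiamondInverse

variable {n : ℕ}

open PowerSeries

theorem expT_neg_sub_one_apply_nil (a : T n) : (expT (-a) - oneT : T n) [] = 0 := by
  simp [expT_apply_nil, oneT]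

theorem expT_neg_sub_one_eq_substT (a : T n) :
    expT (-a) - oneT = substT (rescale (-1) (exp ℚ) - 1) a := by
  rw [expT_neg, substT_sub, substT_one]

theorem substT_of_sSpec {s : ℚ⟦X⟧} (hs : sSpec s) {a : T n} (ha : a [] = 0) :
    substT (s * (X * (rescale (-1) (exp ℚ) - 1))) a = a + (expT (-a) - oneT) := by
  rw [hs, substT_add, substT_X ha, expT_neg_sub_one_eq_substT]

theorem mulT_mulT_expT_neg_sub_one_substT {s : ℚ⟦X⟧} (hs : sSpec s) {a : T n}
    (ha : a [] = 0) :
    mulT (mulT (expT (-a) - oneT) (substT s a)) a = a + (expT (-a) - oneT) := by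
  rw [← substT_of_sSpec hs ha, mul_left_comm, mul_comm, mul_comm s, substT_mul ha, substT_mul ha,
    substT_X ha, expT_neg_sub_one_eq_substT]

theorem mulT_mulT_substT_expT_neg_sub_one {s : ℚ⟦X⟧} (hs : sSpec s) {a : T n}
    (ha : a [] = 0) :
    mulT a (mulT (substT s a) (expT (-a) - oneT)) = a + (expT (-a) - oneT) := by
  rw [← substT_of_sSpec hs ha, mul_left_comm, substT_mul ha, substT_mul ha, substT_X ha,
    expT_neg_sub_one_eq_substT]

theorem dia_left_inv_of_mulT_eq_add {a E S V : T n} (ha : a [] = 0) (hE : E [] = 0)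
    (hESa : mulT (mulT E S) a = a + E) (hV : dia (-a) V = x0 n) :
    dia E (V + mulT (x0 n) (mulT S (x0 n))) = x0 n := by
  set Z := x0 n - mulT (mulT E S) (x0 n)
  have hZ0 : Z [] = 0 := by simp [Z, mulT_apply_nil, x0_apply_nil]
  have hZ : dia Z (-a) = E := by
    rw [dia_sub_left, dia_x0_left (by simp [ha]), dia_mulT_x0_left, mulT_neg_right, hESa,
      Pi.neg_apply, ha, neg_zero, zero_smul, sub_zero]
    abel
  have hEV : dia E V = Z := by rw [← hZ, dia_assoc, hV, dia_x0_right hZ0]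
  rw [dia_add_right, hEV, dia_x0_mulT_right, hE, zero_smul, sub_zero, ← mulT_assoc,
    sub_add_cancel]

theorem dia_right_inv_of_mulT_eq_add {a E S V : T n} (ha : a [] = 0) (hE : E [] = 0)
    (haSE : mulT a (mulT S E) = a + E) (hV : dia V (-a) = x0 n) :
    dia (V + mulT (x0 n) (mulT S (x0 n))) E = x0 n := by
  set Z := x0 n - mulT (x0 n) (mulT S E)
  have hZ0 : Z [] = 0 := by simp [Z, mulT_apply_nil, x0_apply_nil]
  have hZ : dia (-a) Z = E := by
    rw [dia_sub_right, dia_x0_right (by simp [ha]), dia_x0_mulT_right, mulT_neg_left, haSE,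
      Pi.neg_apply, ha, neg_zero, zero_smul, sub_zero]
    abel
  have hVE : dia V E = Z := by rw [← hZ, ← dia_assoc, hV, dia_x0_left hZ0]
  rw [dia_add_left, hVE, ← mulT_assoc, dia_mulT_x0_left, hE, zero_smul, sub_zero, mulT_assoc,
    sub_add_cancel]

end DiamondInverse

theorem statement9_general (n : ℕ) (s : PowerSeries ℚ) (hs : sSpec s)
    (V : T n)
    (hV1 : dia (-(Xi n)) V = x0 n) (hV2 : dia V (-(Xi n)) = x0 n) :
    dia (expT (-(Xi n)) - oneT) (V + mulT (x0 n) (mulT (substT s (Xi n)) (x0 n))) = x0 n ∧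
    dia (V + mulT (x0 n) (mulT (substT s (Xi n)) (x0 n))) (expT (-(Xi n)) - oneT) = x0 n ∧
    expT (-(Xi n)) = prodT ((List.finRange n).reverse.map fun k => expT (-(xgen k))) :=
  ⟨dia_left_inv_of_mulT_eq_add Xi_apply_nil (expT_neg_sub_one_apply_nil _)
      (mulT_mulT_expT_neg_sub_one_substT hs Xi_apply_nil) hV1,
    dia_right_inv_of_mulT_eq_add Xi_apply_nil (expT_neg_sub_one_apply_nil _)
      (mulT_mulT_substT_expT_neg_sub_one hs Xi_apply_nil) hV2,
    expT_neg_Xi⟩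

/-- Let `Ξ = x₁ * ⋯ * xₙ` (BCH product), let `V = (-Ξ)⁻¹` be the `⋄`-inverse of `-Ξ`,
and set `Y = V + x₀ s(Ξ) x₀`.  Then the `⋄`-inverse of `Y` is
`-1 + e^{-Ξ} = -1 + e^{-xₙ} ⋯ e^{-x₁}`; in particular `(-1 + e^{-Ξ}) ⋄ Y = x₀`. -/
theorem statement9 (n : ℕ) (s : PowerSeries ℚ) (hs : sSpec s)
    (V : T n) (hV : degGE 2 (V - x0 n))
    (hV1 : dia (-(Xi n)) V = x0 n) (hV2 : dia V (-(Xi n)) = x0 n) :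
    dia (expT (-(Xi n)) - oneT) (V + mulT (x0 n) (mulT (substT s (Xi n)) (x0 n))) = x0 n ∧
    dia (V + mulT (x0 n) (mulT (substT s (Xi n)) (x0 n))) (expT (-(Xi n)) - oneT) = x0 n ∧
    expT (-(Xi n)) = prodT ((List.finRange n).reverse.map fun k => expT (-(xgen k))) :=
  statement9_general n s hs V hV1 hV2
end

section
/- Let W be the closed linear span in T_{\ge 1} of monomials x_{k_1}···x_{k_m} with k_1 ≥ k_2 ≥ ··· ≥ k_m, and let I be the closed linear span of monomials involving at least two distinct indices. Then W is a subalgebra and I a two-sided ideal of (T_{\ge 1}, ⋄), and W decomposes as a direct sum W = (W ∩ I) ⊕ \bigoplus_{k=1}^n x_k Q[[x_k]]. -/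
/-- `W`: the closed linear span in `T_{≥1}` of the monomials `x_{k₁}⋯x_{kₘ}` with
`k₁ ≥ k₂ ≥ ⋯ ≥ kₘ` (m ≥ 1), i.e. functions supported on nonempty weakly-decreasing words. -/
def Wsub (n : ℕ) : Submodule ℚ (T n) where
  carrier := {f | ∀ w : Word n, ¬(w ≠ [] ∧ w.Chain' (fun a b => b ≤ a)) → f w = 0}
  add_mem' := by
    intro f g hf hg w hw
    simp only [Pi.add_apply, hf w hw, hg w hw, add_zero]
  zero_mem' := by intro w _; rfl
  smul_mem' := by
    intro c f hf w hw
    simp only [Pi.smul_apply, hf w hw, smul_zero]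

/-- `I`: the closed linear span of monomials involving at least two distinct indices,
i.e. functions supported on words with at least two distinct letters. -/
def Isub (n : ℕ) : Submodule ℚ (T n) where
  carrier := {f | ∀ w : Word n, w.dedup.length < 2 → f w = 0}
  add_mem' := by
    intro f g hf hg w hw
    simp only [Pi.add_apply, hf w hw, hg w hw, add_zero]
  zero_mem' := by intro w _; rfl
  smul_mem' := by
    intro c f hf w hw
    simp only [Pi.smul_apply, hf w hw, smul_zero]

/-- `⨁ₖ xₖ ℚ[[xₖ]]`: the closed linear span of the powers `xₖ^m`, `m ≥ 1`, `1 ≤ k ≤ n`,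
i.e. functions supported on nonempty constant words. -/
def Dsub (n : ℕ) : Submodule ℚ (T n) where
  carrier := {f | ∀ w : Word n,
    (¬∃ k : Fin n, ∃ m : ℕ, 1 ≤ m ∧ w = List.replicate m k) → f w = 0}
  add_mem' := by
    intro f g hf hg w hw
    simp only [Pi.add_apply, hf w hw, hg w hw, add_zero]
  zero_mem' := by intro w _; rfl
  smul_mem' := by
    intro c f hf w hw
    simp only [Pi.smul_apply, hf w hw, smul_zero]


/-!
All three subspaces are spaces of coefficient functions supported on a set of words: nonempty
weakly decreasing words for `W`, words with two distinct letters for `I`, nonempty constant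
words for `⨁ₖ xₖℚ[[xₖ]]`. The coefficient of `w` in `f ⋄ g` only involves `f` at the prefixes
`w.take (i + 1)` and `g` at the suffixes `w.drop i`, which overlap in the letter `w[i]`. A word
whose overlapping prefix and suffix are weakly decreasing is itself weakly decreasing, and a word
with two distinct letters in a subword has them itself; this gives closure of `W` and the ideal
property of `I`. The decomposition of `W` is a partition of its support: a nonempty decreasing
word either has two distinct letters or is constant, and not both.
-/

open Set

section SupportedOn

variable {α R : Type*} [Ring R]

variable (R) in
def supportedOn (S : Set α) : Submodule R (α → R) where
  carrier := {f | ∀ w ∉ S, f w = 0}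
  add_mem' hf hg w hw := by simp only [Pi.add_apply, hf w hw, hg w hw, add_zero]
  zero_mem' _ _ := rfl
  smul_mem' c f hf w hw := by simp only [Pi.smul_apply, hf w hw, smul_zero]

theorem mem_supportedOn {S : Set α} {f : α → R} : f ∈ supportedOn R S ↔ ∀ w ∉ S, f w = 0 :=
  Iff.rfl

@[simp]
theorem supportedOn_univ : supportedOn R (univ : Set α) = ⊤ :=
  eq_top_iff.mpr fun _ _ w hw => absurd (mem_univ w) hw

@[simp]
theorem supportedOn_empty : supportedOn R (∅ : Set α) = ⊥ :=
  eq_bot_iff.mpr fun _ hf => (Submodule.mem_bot R).mpr <| funext fun w => hf w (notMem_empty w)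

theorem supportedOn_inf (S S' : Set α) :
    supportedOn R S ⊓ supportedOn R S' = supportedOn R (S ∩ S') := by
  ext f
  simp only [Submodule.mem_inf, mem_supportedOn, mem_inter_iff, not_and_or]
  exact ⟨fun ⟨hS, hS'⟩ w hw => hw.elim (hS w) (hS' w),
    fun h => ⟨fun w hw => h w (.inl hw), fun w hw => h w (.inr hw)⟩⟩

theorem supportedOn_sup (S S' : Set α) :
    supportedOn R S ⊔ supportedOn R S' = supportedOn R (S ∪ S') := by
  refine le_antisymm (sup_le ?_ ?_) fun f hf => ?_
  · exact fun f hf w hw => hf w fun h => hw (.inl h)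
  · exact fun f hf w hw => hf w fun h => hw (.inr h)
  classical
  have hfS : S.indicator f ∈ supportedOn R S := fun w hw => indicator_of_notMem hw f
  have hfS' : f - S.indicator f ∈ supportedOn R S' := fun w hw => by
    by_cases hwS : w ∈ S
    · simp [indicator_of_mem hwS]
    · simp [indicator_of_notMem hwS, hf w (by simp [hwS, hw])]
  simpa using Submodule.add_mem_sup hfS hfS'

end SupportedOn

section Words

variable {α : Type*}

def decreasingWords (α : Type*) [Preorder α] : Set (List α) :=
  {w | w ≠ [] ∧ w.IsChain fun a b => b ≤ a}

def mixedWords (α : Type*) : Set (List α) := {w | ∃ a ∈ w, ∃ b ∈ w, a ≠ b}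

def constantWords (α : Type*) : Set (List α) := {w | ∃ k, ∃ m, 1 ≤ m ∧ w = List.replicate m k}

theorem List.IsChain.of_take_succ_of_drop {R : α → α → Prop} {w : List α} {i : ℕ}
    (hi : i < w.length) (h₁ : (w.take (i + 1)).IsChain R) (h₂ : (w.drop i).IsChain R) :
    w.IsChain R := by
  have hw : w = w.take i ++ [w[i]] ++ w.drop (i + 1) := by simp
  rw [List.take_add_one, List.getElem?_eq_getElem hi, Option.toList_some] at h₁
  rw [List.drop_eq_getElem_cons hi, ← List.singleton_append] at h₂
  rw [hw]
  exact h₁.append_overlap h₂ (List.cons_ne_nil _ _)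

theorem mem_decreasingWords_of_take_of_drop [Preorder α] {w : List α} {i : ℕ}
    (hi : i < w.length) (htake : w.take (i + 1) ∈ decreasingWords α)
    (hdrop : w.drop i ∈ decreasingWords α) : w ∈ decreasingWords α :=
  ⟨List.ne_nil_of_length_pos (i.zero_le.trans_lt hi), htake.2.of_take_succ_of_drop hi hdrop.2⟩

theorem mem_mixedWords_of_sublist {l₁ l₂ : List α} (h : l₁.Sublist l₂) (hl₁ : l₁ ∈ mixedWords α) :
    l₂ ∈ mixedWords α :=
  let ⟨a, ha, b, hb, hab⟩ := hl₁
  ⟨a, h.subset ha, b, h.subset hb, hab⟩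

theorem List.dedup_length_lt_two_iff [DecidableEq α] {l : List α} :
    l.dedup.length < 2 ↔ ∀ a ∈ l, ∀ b ∈ l, a = b := by
  rw [Nat.lt_succ_iff, ← List.card_toFinset, Finset.card_le_one]
  simp only [List.mem_toFinset]

theorem mem_constantWords_iff {w : List α} :
    w ∈ constantWords α ↔ w ≠ [] ∧ ∀ a ∈ w, ∀ b ∈ w, a = b := by
  constructor
  · rintro ⟨k, m, hm, rfl⟩
    refine ⟨by simp; omega, fun a ha b hb => ?_⟩
    rw [List.eq_of_mem_replicate ha, List.eq_of_mem_replicate hb]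
  · rintro ⟨hne, hconst⟩
    obtain ⟨k, hk⟩ := List.exists_mem_of_ne_nil w hne
    exact ⟨k, w.length, List.length_pos_iff.mpr hne,
      List.eq_replicate_iff.mpr ⟨rfl, fun b hb => hconst b hb k hk⟩⟩

theorem constantWords_subset_decreasingWords [Preorder α] :
    constantWords α ⊆ decreasingWords α := by
  rintro _ ⟨k, m, hm, rfl⟩
  exact ⟨by simp; omega, List.isChain_replicate_of_rel m le_rfl⟩

theorem decreasingWords_eq_inter_mixedWords_union_constantWords [Preorder α] :
    decreasingWords α = decreasingWords α ∩ mixedWords α ∪ constantWords α := by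
  refine Subset.antisymm (fun w hw => ?_)
    (union_subset inter_subset_left constantWords_subset_decreasingWords)
  by_cases hmixed : w ∈ mixedWords α
  · exact .inl ⟨hw, hmixed⟩
  · simp only [mixedWords, mem_ofPred_eq, not_exists, not_and, not_not] at hmixed
    exact .inr (mem_constantWords_iff.mpr ⟨hw.1, hmixed⟩)

theorem mixedWords_inter_constantWords : mixedWords α ∩ constantWords α = ∅ :=
  eq_empty_iff_forall_notMem.mpr fun _ ⟨⟨a, ha, b, hb, hab⟩, hconst⟩ =>
    hab ((mem_constantWords_iff.mp hconst).2 a ha b hb)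

end Words

theorem Wsub_eq (n : ℕ) : Wsub n = supportedOn ℚ (decreasingWords (Fin n)) :=
  rfl

theorem Isub_eq (n : ℕ) : Isub n = supportedOn ℚ (mixedWords (Fin n)) := by
  ext f
  simp only [Isub, mixedWords, Submodule.mem_mk, AddSubmonoid.mem_mk, AddSubsemigroup.mem_mk,
    mem_ofPred_eq, mem_supportedOn, List.dedup_length_lt_two_iff, not_exists, not_and, not_not]

theorem Dsub_eq (n : ℕ) : Dsub n = supportedOn ℚ (constantWords (Fin n)) :=
  rfl

theorem dia_mem_supportedOn {n : ℕ} {A B S : Set (Word n)}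
    (hABS : ∀ w ∉ S, ∀ i < w.length, w.take (i + 1) ∉ A ∨ w.drop i ∉ B)
    {f g : T n} (hf : f ∈ supportedOn ℚ A) (hg : g ∈ supportedOn ℚ B) :
    dia f g ∈ supportedOn ℚ S := by
  intro w hw
  refine neg_eq_zero.mpr <| Finset.sum_eq_zero fun i hi => ?_
  rcases hABS w hw i (Finset.mem_range.mp hi) with hA | hB
  · rw [hf _ hA, zero_mul]
  · rw [hg _ hB, mul_zero]

theorem dia_mem_Wsub {n : ℕ} {f g : T n} (hf : f ∈ Wsub n) (hg : g ∈ Wsub n) :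
    dia f g ∈ Wsub n := by
  refine dia_mem_supportedOn (fun w hw i hi => ?_) hf hg
  rw [← not_and_or]
  exact fun ⟨htake, hdrop⟩ => hw (mem_decreasingWords_of_take_of_drop hi htake hdrop)

theorem dia_mem_Isub_left {n : ℕ} {f : T n} (hf : f ∈ Isub n) (g : T n) :
    dia f g ∈ Isub n := by
  rw [Isub_eq] at hf ⊢
  exact dia_mem_supportedOn (B := univ)
    (fun w hw i _ => .inl fun h => hw (mem_mixedWords_of_sublist (List.take_sublist _ _) h))
    hf (by simp)

theorem dia_mem_Isub_right {n : ℕ} (f : T n) {g : T n} (hg : g ∈ Isub n) :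
    dia f g ∈ Isub n := by
  rw [Isub_eq] at hg ⊢
  exact dia_mem_supportedOn (A := univ)
    (fun w hw i _ => .inr fun h => hw (mem_mixedWords_of_sublist (List.drop_sublist _ _) h))
    (by simp) hg

/-- `W` is a `⋄`-subalgebra, `I` is a two-sided `⋄`-ideal of `T_{≥1}`, and
`W = (W ∩ I) ⊕ ⨁ₖ xₖℚ[[xₖ]]`. -/
theorem statement14 (n : ℕ) :
    (∀ f g : T n, f ∈ Wsub n → g ∈ Wsub n → dia f g ∈ Wsub n) ∧
    (∀ f g : T n, f ∈ Isub n → g [] = 0 → dia f g ∈ Isub n ∧ dia g f ∈ Isub n) ∧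
    Wsub n = (Wsub n ⊓ Isub n) ⊔ Dsub n ∧
    (Wsub n ⊓ Isub n) ⊓ Dsub n = ⊥ := by
  refine ⟨fun f g hf hg => dia_mem_Wsub hf hg,
    fun f g hf _ => ⟨dia_mem_Isub_left hf g, dia_mem_Isub_right g hf⟩, ?_, ?_⟩
  · rw [Wsub_eq, Isub_eq, Dsub_eq, supportedOn_inf, supportedOn_sup,
      ← decreasingWords_eq_inter_mixedWords_union_constantWords]
  · rw [Wsub_eq, Isub_eq, Dsub_eq, supportedOn_inf, supportedOn_inf, inter_assoc,
      mixedWords_inter_constantWords, inter_empty, supportedOn_empty]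
end

section
/- Let Q be the automorphism of T with Q(x_k) = -x_{n-k+1}, and let W be the closed span of weakly-decreasing monomials x_{k_1}···x_{k_m} (k_1 ≥ ··· ≥ k_m). Then any element of W in the kernel of Q+1 (i.e., with Qw = -w) lies in \bigoplus_{k=1}^n x_k Q[[x_k]]. -/
theorem List.isChain_eq_of_isChain_ge_of_isChain_le {α : Type*} [PartialOrder α] {l : List α}
    (hge : l.IsChain fun a b => b ≤ a) (hle : l.IsChain (· ≤ ·)) : l.IsChain (· = ·) :=
  List.isChain_iff_getElem.mpr fun i hi =>
    le_antisymm (List.isChain_iff_getElem.mp hle i hi) (List.isChain_iff_getElem.mp hge i hi)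

theorem List.exists_eq_replicate_of_isChain_ge_of_isChain_le {α : Type*} [PartialOrder α]
    {l : List α} (hl : l ≠ []) (hge : l.IsChain fun a b => b ≤ a) (hle : l.IsChain (· ≤ ·)) :
    ∃ a : α, ∃ m : ℕ, 1 ≤ m ∧ l = List.replicate m a := by
  obtain ⟨a, t, rfl⟩ := List.exists_cons_of_ne_nil hl
  have hconst := List.isChain_cons_eq_iff_eq_replicate.mp
    (List.isChain_eq_of_isChain_ge_of_isChain_le hge hle)
  exact ⟨a, t.length + 1, Nat.le_add_left 1 _, by rw [List.replicate_succ, ← hconst]⟩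

/-- `Fin.rev` turns weakly decreasing words into weakly increasing ones, so a weakly decreasing
word whose image is again weakly decreasing is constant. -/
lemma apply_map_rev_eq_zero_of_mem_Wsub {n : ℕ} {f : T n} (hf : f ∈ Wsub n) {w : Word n}
    (hdec : w.IsChain fun a b => b ≤ a)
    (hw : ¬∃ k : Fin n, ∃ m : ℕ, 1 ≤ m ∧ w = List.replicate m k) :
    f (w.map Fin.rev) = 0 := by
  refine hf _ fun ⟨hne, hrevdec⟩ => hw ?_
  have hinc : w.IsChain (· ≤ ·) :=
    ((List.isChain_map Fin.rev).mp hrevdec).imp fun _ _ h => Fin.rev_le_rev.mp h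
  exact List.exists_eq_replicate_of_isChain_ge_of_isChain_le (fun h => hne (by simp [h]))
    hdec hinc

lemma apply_eq_zero_of_Qauto_eq_neg {n : ℕ} {f : T n} (hQ : Qauto f = -f) {w : Word n}
    (hrev : f (w.map Fin.rev) = 0) : f w = 0 := by
  have hw := congrFun hQ w
  simp only [Qauto, Pi.neg_apply, hrev, mul_zero] at hw
  exact neg_eq_zero.mp hw.symm

/-- Any element of `W` in the kernel of `Q + 1` lies in `⨁ₖ xₖ ℚ[[xₖ]]`. -/
theorem statement15 (n : ℕ) (f : T n) (hf : f ∈ Wsub n) (hQ : Qauto f = -f) :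
    f ∈ Dsub n := by
  intro w hw
  by_cases hdec : w ≠ [] ∧ w.IsChain fun a b => b ≤ a
  · exact apply_eq_zero_of_Qauto_eq_neg hQ (apply_map_rev_eq_zero_of_mem_Wsub hf hdec.2 hw)
  · exact hf w hdec
end

section
/- For a genus g surface setting: in the completed tensor algebra on H with symplectic basis A_1,B_1,...,A_g,B_g and symplectic form ω = \sum_i (A_iB_i - B_iA_i), the Massuyeau–Turaev operation ⋄ (defined via the intersection pairing A_i·B_j = δ_{ij} = -B_j·A_i, all other pairings zero) satisfies: -ω is a two-sided unit for ⋄ on T_{\ge 1}, the restriction of ⋄ to T_{\ge 2} is associative, and ⋄ maps T_{\ge l} × T_{\ge m} into T_{\ge l+m-2}. -/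
/-- The symplectic letters: `(i, false) = Aᵢ`, `(i, true) = Bᵢ`, `1 ≤ i ≤ g`. -/
abbrev SLetter (g : ℕ) := Fin g × Bool

/-- The completed tensor algebra on `H = ⊕ᵢ (ℚAᵢ ⊕ ℚBᵢ)`, modeled as ℚ-valued
coefficient functions on words in the symplectic basis letters. -/
abbrev TS (g : ℕ) : Type := List (SLetter g) → ℚ

/-- The intersection pairing on `H`: `Aᵢ·Bⱼ = δᵢⱼ = -Bᵢ·Aⱼ`, `Aᵢ·Aⱼ = Bᵢ·Bⱼ = 0`. -/
def pairL {g : ℕ} (a b : SLetter g) : ℚ :=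
  if a.1 = b.1 then
    (if a.2 = false ∧ b.2 = true then 1
     else if a.2 = true ∧ b.2 = false then -1 else 0)
  else 0

/-- The monomial `X₁⋯Xₘ` (given by a word) as an element of `TS g`. -/
def monoS {g : ℕ} (w0 : List (SLetter g)) : TS g := fun w => if w = w0 then 1 else 0

/-- The symplectic form `ω = ∑ᵢ (AᵢBᵢ - BᵢAᵢ)`. -/
def omegaS (g : ℕ) : TS g :=
  ∑ i : Fin g, (monoS [(i, false), (i, true)] - monoS [(i, true), (i, false)])

/-- The Massuyeau–Turaev operation `⋄ : T_{≥1} × T_{≥1} → T`, determined on monomials by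
`(X₁⋯X_{l-1}X_l) ⋄ (Y₁Y₂⋯Yₘ) = (X_l·Y₁) X₁⋯X_{l-1}Y₂⋯Yₘ`,
extended bilinearly and continuously. -/
def diaS {g : ℕ} (f h : TS g) : TS g :=
  fun w => ∑ i ∈ Finset.range (w.length + 1), ∑ a : SLetter g, ∑ b : SLetter g,
    pairL a b * f (w.take i ++ [a]) * h (b :: w.drop i)

/-- `f ∈ T_{≥p}`: all components of degree `< p` vanish. -/
def degGES {g : ℕ} (p : ℕ) (f : TS g) : Prop :=
  ∀ w : List (SLetter g), w.length < p → f w = 0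


/-! Neither associativity nor the degree bound depends on the pairing. Writing `f ⋄ h` as a sum
over the cut points of a word, both `(f ⋄ h) ⋄ k` and `f ⋄ (h ⋄ k)` become sums, over pairs of
cut points, of the doubly contracted product of `f`, `h` and `k`, up to terms that evaluate `h`
on a single letter; these vanish as soon as `h` has no linear part. For the unit, `ω` read as a
matrix is the intersection matrix `J` itself, and `J² = -1`, so `-ω` contracts against `J` to
the identity on either side. -/

open Finset

theorem Finset.sum_sum_comm_pairs {α M : Type*} [Fintype α] [AddCommMonoid M]
    (F : α → α → α → α → M) :
    ∑ a, ∑ b, ∑ c, ∑ d, F a b c d = ∑ c, ∑ d, ∑ a, ∑ b, F a b c d := by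
  calc ∑ a, ∑ b, ∑ c, ∑ d, F a b c d = ∑ a, ∑ c, ∑ b, ∑ d, F a b c d :=
        sum_congr rfl fun _ _ => sum_comm
    _ = ∑ c, ∑ a, ∑ b, ∑ d, F a b c d := sum_comm
    _ = ∑ c, ∑ d, ∑ a, ∑ b, F a b c d :=
        sum_congr rfl fun _ _ => (sum_congr rfl fun _ _ => sum_comm).trans sum_comm

section Diamond

variable {α R : Type*} [Fintype α] [CommSemiring R]

def diamond (β : α → α → R) (f h : List α → R) : List α → R :=
  fun w => ∑ i ∈ range (w.length + 1), ∑ a, ∑ b,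
    β a b * f (w.take i ++ [a]) * h (b :: w.drop i)

variable (β : α → α → R)

theorem diamond_eq_zero_of_length_lt {l m : ℕ} {f h : List α → R}
    (hf : ∀ w : List α, w.length < l → f w = 0) (hh : ∀ w : List α, w.length < m → h w = 0)
    (w : List α) (hw : w.length < l + m - 2) : diamond β f h w = 0 := by
  refine sum_eq_zero fun i hi => sum_eq_zero fun a _ => sum_eq_zero fun b _ => ?_
  rw [mem_range] at hi
  by_cases hil : i + 1 < l
  · rw [hf _ (by simp; omega), mul_zero, zero_mul]
  · rw [hh _ (by simp; omega), mul_zero]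

theorem diamond_append_singleton {f h : List α → R} (hh : ∀ b, h [b] = 0)
    (u : List α) (c : α) :
    diamond β f h (u ++ [c]) = ∑ p ∈ range (u.length + 1), ∑ a, ∑ b,
      β a b * f (u.take p ++ [a]) * h (b :: u.drop p ++ [c]) := by
  rw [diamond, List.length_append, List.length_singleton, sum_range_succ,
    List.drop_of_length_le (by simp)]
  simp only [hh, mul_zero, sum_const_zero, add_zero]
  refine sum_congr rfl fun p hp => ?_
  have hp : p ≤ u.length := Nat.lt_succ_iff.mp (mem_range.mp hp)
  rw [List.take_append_of_le_length hp, List.drop_append_of_le_length hp]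
  rfl

theorem diamond_cons {h k : List α → R} (hh : ∀ a, h [a] = 0) (c : α) (v : List α) :
    diamond β h k (c :: v) = ∑ r ∈ range (v.length + 1), ∑ a, ∑ b,
      β a b * h (c :: v.take r ++ [a]) * k (b :: v.drop r) := by
  rw [diamond, List.length_cons, sum_range_succ']
  simp only [List.take_zero, List.nil_append, hh, mul_zero, zero_mul, sum_const_zero,
    add_zero, List.take_succ_cons, List.drop_succ_cons]

theorem diamond_assoc {f h k : List α → R} (hh : ∀ a, h [a] = 0) :
    diamond β (diamond β f h) k = diamond β f (diamond β h k) := by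
  funext w
  set T : ℕ → ℕ → R := fun p r => ∑ a, ∑ b, ∑ c, ∑ d,
    β a b * β c d * f (w.take p ++ [a]) * h (b :: (w.drop p).take r ++ [c])
      * k (d :: w.drop (p + r))
  have lhs : diamond β (diamond β f h) k w =
      ∑ i ∈ range (w.length + 1), ∑ p ∈ range (i + 1), T p (i - p) := by
    refine sum_congr rfl fun i hi => ?_
    have hi : i ≤ w.length := Nat.lt_succ_iff.mp (mem_range.mp hi)
    simp only [diamond_append_singleton β hh, List.length_take_of_le hi, sum_mul, mul_sum]
    refine ((sum_congr rfl fun c _ => sum_comm).trans sum_comm).trans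
      (sum_congr rfl fun p hp => ?_)
    obtain ⟨r, rfl⟩ := Nat.exists_eq_add_of_le (Nat.lt_succ_iff.mp (mem_range.mp hp))
    rw [List.take_take, min_eq_left (Nat.le_add_right p r), List.drop_take,
      Nat.add_sub_cancel_left, sum_sum_comm_pairs]
    refine sum_congr rfl fun a _ => sum_congr rfl fun b _ => sum_congr rfl fun c _ =>
      sum_congr rfl fun d _ => ?_
    ring
  have rhs : diamond β f (diamond β h k) w =
      ∑ p ∈ range (w.length + 1), ∑ r ∈ range (w.length + 1 - p), T p r := by
    refine sum_congr rfl fun p hp => ?_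
    have hp : p ≤ w.length := Nat.lt_succ_iff.mp (mem_range.mp hp)
    simp only [diamond_cons β hh, List.length_drop, List.drop_drop, mul_sum]
    rw [← Nat.sub_add_comm hp]
    refine ((sum_congr rfl fun a _ => sum_comm).trans sum_comm).trans
      (sum_congr rfl fun r _ => ?_)
    refine sum_congr rfl fun a _ => sum_congr rfl fun b _ => sum_congr rfl fun c _ =>
      sum_congr rfl fun d _ => ?_
    ring
  rw [lhs, rhs, sum_range_diag_flip]

variable [DecidableEq α] {e u : List α → R}

theorem diamond_unit_left (he : ∀ w : List α, w.length ≠ 2 → e w = 0)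
    (hinv : Matrix.of (fun x y => e [x, y]) * Matrix.of β = 1)
    (hu : u [] = 0) : diamond β e u = u := by
  funext w
  rcases w with _ | ⟨x, t⟩
  · simp [diamond, he, hu]
  rw [diamond, sum_eq_single 1]
  · have hrow (b : α) : ∑ a, e [x, a] * β a b = if x = b then 1 else 0 := by
      simpa [Matrix.mul_apply, Matrix.one_apply] using congrFun (congrFun hinv x) b
    calc ∑ a, ∑ b, β a b * e ((x :: t).take 1 ++ [a]) * u (b :: (x :: t).drop 1)
        = ∑ b, (∑ a, e [x, a] * β a b) * u (b :: t) := by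
          rw [sum_comm]
          simp only [sum_mul]
          refine sum_congr rfl fun b _ => sum_congr rfl fun a _ => ?_
          simp only [List.take_succ_cons, List.take_zero, List.drop_succ_cons, List.drop_zero,
            List.cons_append, List.nil_append]
          ring
      _ = u (x :: t) := by simp [hrow]
  · intro i hi hi1
    refine sum_eq_zero fun a _ => sum_eq_zero fun b _ => ?_
    rw [he _ (by simp at hi ⊢; omega), mul_zero, zero_mul]
  · simp

theorem diamond_unit_right (he : ∀ w : List α, w.length ≠ 2 → e w = 0)
    (hinv : Matrix.of β * Matrix.of (fun x y => e [x, y]) = 1)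
    (hu : u [] = 0) : diamond β u e = u := by
  funext w
  rcases List.eq_nil_or_concat' w with rfl | ⟨v, y, rfl⟩
  · simp [diamond, he, hu]
  rw [diamond, sum_eq_single v.length]
  · have hcol (a : α) : ∑ b, β a b * e [b, y] = if a = y then 1 else 0 := by
      simpa [Matrix.mul_apply, Matrix.one_apply] using congrFun (congrFun hinv a) y
    calc ∑ a, ∑ b,
          β a b * u ((v ++ [y]).take v.length ++ [a]) * e (b :: (v ++ [y]).drop v.length)
        = ∑ a, (∑ b, β a b * e [b, y]) * u (v ++ [a]) := by
          simp only [List.take_left', List.drop_left', sum_mul]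
          refine sum_congr rfl fun a _ => sum_congr rfl fun b _ => ?_
          ring
      _ = u (v ++ [y]) := by simp [hcol]
  · intro i hi hiv
    refine sum_eq_zero fun a _ => sum_eq_zero fun b _ => ?_
    rw [he _ (by simp at hi ⊢; omega), mul_zero]
  · simp

end Diamond

section Symplectic

variable {g : ℕ}

theorem diaS_eq_diamond : (diaS : TS g → TS g → TS g) = diamond pairL := rfl

theorem omegaS_apply_of_length_ne_two {w : List (SLetter g)} (hw : w.length ≠ 2) :
    omegaS g w = 0 := by
  refine (Finset.sum_apply w _ _).trans (sum_eq_zero fun i _ => ?_)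
  simp only [Pi.sub_apply, monoS]
  rw [if_neg, if_neg, sub_zero] <;> rintro rfl <;> simp at hw

theorem omegaS_apply_pair (x y : SLetter g) : omegaS g [x, y] = pairL x y := by
  obtain ⟨i, s⟩ := x
  obtain ⟨j, t⟩ := y
  simp only [omegaS, Finset.sum_apply, Pi.sub_apply, monoS, pairL]
  cases s <;> cases t <;> by_cases hij : i = j <;> simp [hij, eq_comm, ite_and]

theorem pairL_mul_pairL : Matrix.of (pairL (g := g)) * Matrix.of pairL = -1 := by
  ext ⟨i, s⟩ ⟨j, t⟩
  simp only [Matrix.mul_apply, Matrix.of_apply, Matrix.neg_apply, Matrix.one_apply,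
    Fintype.sum_prod_type, Fintype.sum_bool, pairL]
  cases s <;> cases t <;> by_cases hij : i = j <;> simp [hij, eq_comm]

end Symplectic

/-- `-ω` is a two-sided unit for `⋄` on `T_{≥1}`, the restriction of `⋄` to `T_{≥2}` is
associative, and `⋄` maps `T_{≥l} × T_{≥m}` into `T_{≥l+m-2}`. -/
theorem statement18 (g : ℕ) :
    (∀ u : TS g, u [] = 0 → diaS (-omegaS g) u = u ∧ diaS u (-omegaS g) = u) ∧
    (∀ f h k : TS g, degGES 2 f → degGES 2 h → degGES 2 k →
      diaS (diaS f h) k = diaS f (diaS h k)) ∧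
    (∀ (l m : ℕ) (f h : TS g), degGES l f → degGES m h →
      degGES (l + m - 2) (diaS f h)) := by
  have hω (w : List (SLetter g)) (hw : w.length ≠ 2) : (-omegaS g) w = 0 := by
    simp [omegaS_apply_of_length_ne_two hw]
  have hmat : Matrix.of (fun x y => (-omegaS g) [x, y]) = -Matrix.of pairL := by
    ext x y
    simp [omegaS_apply_pair]
  rw [diaS_eq_diamond]
  refine ⟨fun u hu => ⟨?_, ?_⟩, fun f h k _ hh _ => diamond_assoc pairL fun a => hh [a] (by simp),
    fun l m f h hf hh => diamond_eq_zero_of_length_lt pairL hf hh⟩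
  · exact diamond_unit_left pairL hω (by rw [hmat, neg_mul, pairL_mul_pairL, neg_neg]) hu
  · exact diamond_unit_right pairL hω (by rw [hmat, mul_neg, pairL_mul_pairL, neg_neg]) hu
end
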